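/- For any 0 < c < 1/2 and sufficiently large d, there exists a set S of at least 2^{Ω(d^c)} unit vectors in ℝ^d such that for every pair of distinct u, v ∈ S, |u·v| ≤ O(d^{c−1/2}). -/

import Mathlib

open Polynomial Finset

lemma agree_card_le {F : Type*} [Field F] [Fintype F] [DecidableEq F] (k : ℕ)
    {a b : Fin k → F} (hab : a ≠ b) :
    (univ.filter (fun x : F => ∑ i : Fin k, a i * x ^ (i:ℕ) = ∑ i : Fin k, b i * x ^ (i:ℕ))).card
      ≤ k - 1 := by
  set p : F[X] := ∑ i : Fin k, Polynomial.C (a i - b i) * Polynomial.X ^ (i:ℕ) with hp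
  have hpne : p ≠ 0 := by
    obtain ⟨i, hi⟩ := Function.ne_iff.mp hab
    intro h
    apply hi
    have := congrArg (fun q => Polynomial.coeff q (i:ℕ)) h
    simp only [hp, Polynomial.finset_sum_coeff, Polynomial.coeff_C_mul,
      Polynomial.coeff_X_pow, Polynomial.coeff_zero, mul_ite, mul_one, mul_zero] at this
    rw [Finset.sum_eq_single i (fun j _ hj => if_neg (fun h => hj (Fin.val_injective h.symm))) (by simp)] at this
    simp only [if_pos rfl] at this
    exact sub_eq_zero.mp this
  have hdeg : p.natDegree ≤ k - 1 := by
    apply Polynomial.natDegree_sum_le_of_forall_le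
    intro i _
    exact le_trans (Polynomial.natDegree_C_mul_le _ _)
      (le_trans (Polynomial.natDegree_X_pow_le _) (Nat.le_pred_of_lt i.isLt))
  refine le_trans (Polynomial.card_le_degree_of_subset_roots ?_) hdeg
  intro x hx
  simp only [Finset.mem_val, Finset.mem_filter, Finset.mem_univ, true_and] at hx
  rw [Polynomial.mem_roots hpne]
  simp [hp, Polynomial.IsRoot, Polynomial.eval_finset_sum, sub_mul, Finset.sum_sub_distrib, hx]

section RS

variable {q k d : ℕ} [Fact q.Prime] [NeZero q]

noncomputable def ev (a : Fin k → ZMod q) (x : ZMod q) : ZMod q := ∑ i : Fin k, a i * x ^ (i:ℕ)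

noncomputable def V (e : ZMod q × ZMod q ↪ Fin d) (a : Fin k → ZMod q) :
    EuclideanSpace ℝ (Fin d) :=
  WithLp.toLp 2 (fun j => ∑ x : ZMod q, if e (x, ev a x) = j then (Real.sqrt q)⁻¹ else 0)

lemma inner_V (e : ZMod q × ZMod q ↪ Fin d) (a b : Fin k → ZMod q) :
    (inner ℝ (V e a) (V e b) : ℝ)
      = ((univ.filter fun x : ZMod q => ev a x = ev b x).card : ℝ) / q := by
  have hq0 : (0:ℝ) < q := by exact_mod_cast Nat.pos_of_ne_zero (NeZero.ne q)
  have hs : (Real.sqrt q)⁻¹ * (Real.sqrt q)⁻¹ = 1 / q := by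
    rw [← mul_inv, Real.mul_self_sqrt hq0.le, one_div]
  simp only [PiLp.inner_apply, RCLike.inner_apply, conj_trivial, V, PiLp.toLp_apply]
  refine (Finset.sum_congr rfl fun j _ => mul_comm _ _).trans ?_
  calc (∑ j : Fin d, (∑ x : ZMod q, if e (x, ev a x) = j then (Real.sqrt q)⁻¹ else 0)
          * ∑ y : ZMod q, if e (y, ev b y) = j then (Real.sqrt q)⁻¹ else 0)
      = ∑ x : ZMod q, ∑ y : ZMod q, ∑ j : Fin d,
          if e (x, ev a x) = j ∧ e (y, ev b y) = j then (Real.sqrt q)⁻¹ * (Real.sqrt q)⁻¹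
          else 0 := by
        simp_rw [Finset.sum_mul_sum, ite_zero_mul_ite_zero]
        rw [Finset.sum_comm]
        refine Finset.sum_congr rfl fun x _ => Finset.sum_comm
    _ = ∑ x : ZMod q, ∑ y : ZMod q,
          if e (x, ev a x) = e (y, ev b y) then 1 / (q:ℝ) else 0 := by
        refine Finset.sum_congr rfl fun x _ => Finset.sum_congr rfl fun y _ => ?_
        by_cases h : e (x, ev a x) = e (y, ev b y)
        · rw [if_pos h, Finset.sum_eq_single (e (x, ev a x))]
          · rw [if_pos ⟨rfl, h.symm⟩, hs]
          · intro j _ hj; rw [if_neg]; rintro ⟨h1, -⟩; exact hj h1.symm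
          · simp
        · rw [if_neg h, Finset.sum_eq_zero]
          intro j _; rw [if_neg]; rintro ⟨h1, h2⟩; exact h (h1.trans h2.symm)
    _ = ∑ x : ZMod q, if ev a x = ev b x then 1 / (q:ℝ) else 0 := by
        refine Finset.sum_congr rfl fun x _ => ?_
        rw [Finset.sum_eq_single x
          (fun y _ hy => if_neg fun h => hy (congrArg Prod.fst (e.injective h)).symm) (by simp)]
        simp [EmbeddingLike.apply_eq_iff_eq, Prod.mk.injEq]
    _ = ((univ.filter fun x : ZMod q => ev a x = ev b x).card : ℝ) / q := by
        rw [Finset.sum_ite, Finset.sum_const, Finset.sum_const_zero, add_zero,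
          nsmul_eq_mul, mul_one_div]

end RS

section RS2
open Finset

lemma norm_V {q k d : ℕ} [Fact q.Prime] [NeZero q] (e : ZMod q × ZMod q ↪ Fin d)
    (a : Fin k → ZMod q) : ‖V e a‖ = 1 := by
  have h : (inner ℝ (V e a) (V e a) : ℝ) = 1 := by
    rw [inner_V]
    simp [ZMod.card, div_self (show (q:ℝ) ≠ 0 by exact_mod_cast NeZero.ne q)]
  have h2 : ‖V e a‖ * ‖V e a‖ = 1 := by rw [← real_inner_self_eq_norm_mul_norm, h]
  rcases mul_self_eq_one_iff.mp h2 with h3 | h3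
  · exact h3
  · nlinarith [norm_nonneg (V e a)]

lemma key {q k d : ℕ} (hq : q.Prime) (hkq : k ≤ q) (hqd : q * q ≤ d) :
    ∃ S : Finset (EuclideanSpace ℝ (Fin d)), S.card = q ^ k ∧ (∀ v ∈ S, ‖v‖ = 1) ∧
      ∀ u ∈ S, ∀ v ∈ S, u ≠ v → |(inner ℝ u v : ℝ)| ≤ (k:ℝ) / q := by
  classical
  haveI := Fact.mk hq
  haveI : NeZero q := ⟨hq.pos.ne'⟩
  have hq0 : (0:ℝ) < q := by exact_mod_cast hq.pos
  obtain ⟨e⟩ : Nonempty (ZMod q × ZMod q ↪ Fin d) := by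
    apply Function.Embedding.nonempty_of_card_le
    simpa [ZMod.card] using hqd
  have hagree : ∀ a b : Fin k → ZMod q, a ≠ b →
      (univ.filter fun x : ZMod q => ev a x = ev b x).card ≤ k - 1 := by
    intro a b hab
    simp only [ev]
    convert agree_card_le k hab
    exact Finset.filter_congr_decidable _ _ _
  have hcard : ∀ a b : Fin k → ZMod q, a ≠ b →
      (univ.filter fun x : ZMod q => ev a x = ev b x).card < q := by
    intro a b hab
    exact lt_of_le_of_lt (hagree a b hab)
      (lt_of_le_of_lt (Nat.sub_le_sub_right hkq 1) (Nat.sub_lt hq.pos one_pos))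
  have hVinj : Function.Injective (V (k := k) e) := by
    intro a b hab
    by_contra hne
    have h1 : (inner ℝ (V e a) (V e b) : ℝ) < 1 := by
      rw [inner_V]
      rw [div_lt_one hq0]
      exact_mod_cast hcard a b hne
    rw [hab, real_inner_self_eq_norm_mul_norm, norm_V, mul_one] at h1
    exact lt_irrefl _ h1
  refine ⟨Finset.image (V (k := k) e) univ, ?_, ?_, ?_⟩
  · rw [Finset.card_image_of_injective _ hVinj, Finset.card_univ]
    simp [ZMod.card]
  · intro v hv
    obtain ⟨a, -, rfl⟩ := Finset.mem_image.mp hv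
    exact norm_V e a
  · intro u hu v hv huv
    obtain ⟨a, -, rfl⟩ := Finset.mem_image.mp hu
    obtain ⟨b, -, rfl⟩ := Finset.mem_image.mp hv
    have hab : a ≠ b := fun h => huv (congrArg _ h)
    rw [inner_V, abs_of_nonneg (by positivity)]
    rw [div_le_div_iff_of_pos_right hq0]
    exact_mod_cast le_trans (hagree a b hab) (Nat.sub_le k 1)

end RS2


open Finset Filter




/-- For any `0 < c < 1/2` and all sufficiently large `d`, there is a set of at least
`2^{Ω(d^c)}` unit vectors in `ℝ^d` that are pairwise nearly orthogonal:
`|u·v| ≤ O(d^{c-1/2})` for distinct `u, v`. -/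
theorem stmt9 : ∃ κ > (0:ℝ), ∃ C > (0:ℝ), ∀ c : ℝ, 0 < c → c < 1/2 →
    ∃ d₀ : ℕ, ∀ d : ℕ, d₀ ≤ d →
    ∃ S : Finset (EuclideanSpace ℝ (Fin d)),
      (2:ℝ) ^ (κ * (d:ℝ)^c) ≤ (S.card : ℝ) ∧
      (∀ v ∈ S, ‖v‖ = 1) ∧
      ∀ u ∈ S, ∀ v ∈ S, u ≠ v → |(inner ℝ u v : ℝ)| ≤ C * (d:ℝ)^(c - 1/2) := by
  refine ⟨1, one_pos, 8, by norm_num, fun c hc0 hc12 => ?_⟩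
  have hT : Tendsto (fun d : ℕ => (d:ℝ) ^ ((1:ℝ)/2 - c)) atTop atTop :=
    (tendsto_rpow_atTop (by linarith)).comp tendsto_natCast_atTop_atTop
  obtain ⟨d₁, hd₁⟩ := Filter.eventually_atTop.mp (hT.eventually_ge_atTop 32)
  refine ⟨max d₁ 16, fun d hd => ?_⟩
  have hd16 : 16 ≤ d := le_trans (le_max_right _ _) hd
  have h32 : (32:ℝ) ≤ (d:ℝ) ^ ((1:ℝ)/2 - c) := hd₁ d (le_trans (le_max_left _ _) hd)
  have hD16 : (16:ℝ) ≤ (d:ℝ) := by exact_mod_cast hd16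
  have hD0 : (0:ℝ) < (d:ℝ) := by linarith
  have hD1 : (1:ℝ) ≤ (d:ℝ) := by linarith
  -- the prime q
  set n : ℕ := Nat.sqrt d with hn
  have hn4 : 4 ≤ n := by
    exact Nat.le_sqrt.mpr (by omega)
  obtain ⟨q, hqp, hmq, hq2m⟩ := Nat.exists_prime_lt_and_le_two_mul (n / 2) (by omega)
  have hqn : q ≤ n := by omega
  have hqqd : q * q ≤ d := le_trans (Nat.mul_le_mul hqn hqn) (Nat.sqrt_le d)
  have hq0 : (0:ℝ) < (q:ℝ) := by exact_mod_cast hqp.pos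
  -- √d < 2q
  have hsd2q : Real.sqrt d < 2 * q := by
    have h1 : Real.sqrt d < n + 1 := by
      rw [show ((n:ℝ) + 1) = ((n+1 : ℕ) : ℝ) by push_cast; ring]
      rw [Real.sqrt_lt' (by positivity)]
      exact_mod_cast Nat.lt_succ_sqrt' d
    have h2 : (n:ℝ) + 1 ≤ 2 * q := by exact_mod_cast (by omega : n + 1 ≤ 2 * q)
    linarith
  -- k
  set k : ℕ := ⌈(d:ℝ)^c⌉₊ with hk
  have hdc1 : (1:ℝ) ≤ (d:ℝ)^c := Real.one_le_rpow hD1 hc0.le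
  have hkU : (k:ℝ) ≤ 2 * (d:ℝ)^c := by
    have h : (k:ℝ) < (d:ℝ)^c + 1 :=
      Nat.ceil_lt_add_one (show (0:ℝ) ≤ (d:ℝ)^c by positivity)
    linarith
  -- 32 d^c ≤ √d
  have hsplit : (d:ℝ) ^ ((1:ℝ)/2 - c) * (d:ℝ)^c = Real.sqrt d := by
    rw [← Real.rpow_add hD0, Real.sqrt_eq_rpow]
    norm_num
  have h32dc : 32 * (d:ℝ)^c ≤ Real.sqrt d := by
    rw [← hsplit]
    exact mul_le_mul_of_nonneg_right h32 (by positivity)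
  have hkq : k ≤ q := by
    have : (k:ℝ) ≤ (q:ℝ) := by nlinarith
    exact_mod_cast this
  obtain ⟨S, hScard, hSnorm, hSinner⟩ := key hqp hkq hqqd
  refine ⟨S, ?_, hSnorm, ?_⟩
  · rw [hScard, one_mul]
    push_cast
    calc (2:ℝ) ^ ((d:ℝ)^c) ≤ (2:ℝ) ^ ((k:ℕ):ℝ) :=
          Real.rpow_le_rpow_of_exponent_le one_le_two (Nat.le_ceil _)
      _ = (2:ℝ) ^ (k:ℕ) := Real.rpow_natCast 2 k
      _ ≤ (q:ℝ) ^ (k:ℕ) := by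
          apply pow_le_pow_left₀ (by norm_num)
          exact_mod_cast hqp.two_le
  · intro u hu v hv huv
    refine le_trans (hSinner u hu v hv huv) ?_
    have hsq0 : (0:ℝ) < Real.sqrt d := Real.sqrt_pos.mpr hD0
    have hq' : Real.sqrt d / 2 ≤ (q:ℝ) := by linarith
    calc (k:ℝ) / q ≤ (2 * (d:ℝ)^c) / (Real.sqrt d / 2) := by
          apply div_le_div₀ (by positivity) hkU (by positivity) hq'
      _ = 4 * ((d:ℝ)^c / Real.sqrt d) := by ring
      _ = 4 * (d:ℝ)^(c - 1/2) := by
          rw [Real.sqrt_eq_rpow, ← Real.rpow_sub hD0]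
      _ ≤ 8 * (d:ℝ)^(c - 1/2) := by
          have : (0:ℝ) ≤ (d:ℝ)^(c - 1/2) := by positivity
          linarith
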